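/- arXiv:2211.04217 — 2 statements merged into one kernel-verified Lean document; each statement's English description precedes it below -/
import Mathlib

section
/- Let i ≥ 1 be a natural number and let D, a : ℕ → ℝ be sequences with D ℓ ≥ 0 and a ℓ ≥ 0 for all ℓ. Assume a i ≤ 2·D i, and assume that for every ℓ with 1 ≤ ℓ < i one has a ℓ ≤ 16·D ℓ and D(ℓ+1) ≤ 235885·D ℓ. Then for every ℓ with 1 ≤ ℓ ≤ i, ∑_{j=ℓ}^{i} a j ≤ 2·236145^{i−ℓ}·D ℓ. -/
/-!
Peeling off the first term, `∑_{j=ℓ}^{i} a j = a ℓ + ∑_{j=ℓ+1}^{i} a j`, and bounding the tail by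
induction from the top gives `a ℓ + c K^n D (ℓ+1) ≤ (A + c B) K^n D ℓ ≤ c K^{n+1} D ℓ`, as long as
`A + c B ≤ c K`. With `A = 16`, `B = 235885`, `c = 2` this holds for `K = 236145`.
-/

open Finset

theorem sum_Icc_eq_add_sum_Icc_add_one {M : Type*} [AddCommMonoid M] (f : ℕ → M) {m n : ℕ}
    (h : m ≤ n) : ∑ j ∈ Icc m n, f j = f m + ∑ j ∈ Icc (m + 1) n, f j := by
  rw [← insert_Icc_add_one_left_eq_Icc h, sum_insert (by simp)]

theorem sum_Icc_le_geometric {m i : ℕ} {A B c K : ℝ} {D a : ℕ → ℝ} (hD : ∀ ℓ, 0 ≤ D ℓ)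
    (hA : 0 ≤ A) (hc : 0 ≤ c) (hK : 1 ≤ K) (hABK : A + c * B ≤ c * K)
    (hfin : a i ≤ c * D i)
    (hstep : ∀ ℓ, m ≤ ℓ → ℓ < i → a ℓ ≤ A * D ℓ ∧ D (ℓ + 1) ≤ B * D ℓ)
    {ℓ : ℕ} (hmℓ : m ≤ ℓ) (hℓi : ℓ ≤ i) :
    ∑ j ∈ Icc ℓ i, a j ≤ c * K ^ (i - ℓ) * D ℓ := by
  induction hℓi using Nat.decreasingInduction with
  | self => simpa using hfin
  | of_succ k hki ih =>
    obtain ⟨ha, hDsucc⟩ := hstep k hmℓ hki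
    have hik : i - k = i - (k + 1) + 1 := by omega
    set n := i - (k + 1)
    have hKn : 1 ≤ K ^ n := one_le_pow₀ hK
    have hDk := hD k
    have hcKn : 0 ≤ c * K ^ n := by positivity
    calc ∑ j ∈ Icc k i, a j = a k + ∑ j ∈ Icc (k + 1) i, a j :=
          sum_Icc_eq_add_sum_Icc_add_one a hki.le
      _ ≤ A * D k + c * K ^ n * (B * D k) := by
          gcongr
          exact (ih (hmℓ.trans k.le_succ)).trans (mul_le_mul_of_nonneg_left hDsucc hcKn)
      _ ≤ (A + c * B) * K ^ n * D k := by nlinarith [mul_nonneg hA hDk]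
      _ ≤ c * K ^ (i - k) * D k := by
          rw [hik, pow_succ]
          nlinarith [mul_nonneg (zero_le_one.trans hKn) hDk]

theorem query_upper_bound_induction_general (i : ℕ) (D a : ℕ → ℝ)
    (hD : ∀ ℓ, 0 ≤ D ℓ)
    (hfin : a i ≤ 2 * D i)
    (hstep : ∀ ℓ, 1 ≤ ℓ → ℓ < i → a ℓ ≤ 16 * D ℓ ∧ D (ℓ + 1) ≤ 235885 * D ℓ) :
    ∀ ℓ, 1 ≤ ℓ → ℓ ≤ i →
      ∑ j ∈ Finset.Icc ℓ i, a j ≤ 2 * (236145 : ℝ) ^ (i - ℓ) * D ℓ :=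
  fun _ hℓ hℓi =>
    sum_Icc_le_geometric hD (by norm_num) (by norm_num) (by norm_num) (by norm_num) hfin hstep hℓ hℓi

theorem query_upper_bound_induction (i : ℕ) (hi : 1 ≤ i) (D a : ℕ → ℝ)
    (hD : ∀ ℓ, 0 ≤ D ℓ) (ha : ∀ ℓ, 0 ≤ a ℓ)
    (hfin : a i ≤ 2 * D i)
    (hstep : ∀ ℓ, 1 ≤ ℓ → ℓ < i → a ℓ ≤ 16 * D ℓ ∧ D (ℓ + 1) ≤ 235885 * D ℓ) :
    ∀ ℓ, 1 ≤ ℓ → ℓ ≤ i →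
      ∑ j ∈ Finset.Icc ℓ i, a j ≤ 2 * (236145 : ℝ) ^ (i - ℓ) * D ℓ :=
  query_upper_bound_induction_general i D a hD hfin hstep
end

section
/- Let (V, d) be a pseudometric space, S ⊆ V a nonempty set, and pd : V → ℝ a function such that infDist(v, S) ≤ pd(v) ≤ 4·infDist(v, S) for every v ∈ V. Let ℓ ≥ 1 and let y_0, y_1, …, y_ℓ ∈ V be points such that d(y_s, y_{s+1}) > (1/4)·pd(y_s) for every 0 ≤ s ≤ ℓ−1, and let D ∈ ℝ satisfy ∑_{s=0}^{ℓ−1} d(y_s, y_{s+1}) ≤ D. Then ∑_{s=1}^{ℓ} pd(y_s) ≤ 20·D. -/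
/-!
The pivot distance of each endpoint is charged to the segment ending there: since
`pd (y s) < 4 d(y s, y (s+1))`, the 1-Lipschitz property of `infDist v S` in `v` gives
`infDist (y (s+1)) S < 5 d(y s, y (s+1))`, hence `pd (y (s+1)) < 20 d(y s, y (s+1))`.
Summing over the segments gives the bound `20 D`.
-/

open Metric

theorem Finset.sum_Icc_one_eq_sum_range_succ {M : Type*} [AddCommMonoid M] (f : ℕ → M) (n : ℕ) :
    ∑ s ∈ Finset.Icc 1 n, f s = ∑ s ∈ Finset.range n, f (s + 1) := by
  rw [Finset.range_eq_Ico, Finset.sum_Ico_add' f 0 n 1]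
  rfl

section PivotDistance

variable {V : Type*} [PseudoMetricSpace V] {S : Set V} {x y : V}

theorem Metric.infDist_le_five_mul_dist_of_infDist_le (h : infDist x S ≤ 4 * dist x y) :
    infDist y S ≤ 5 * dist x y := by
  have := infDist_le_infDist_add_dist (s := S) (x := y) (y := x)
  rw [dist_comm] at this
  linarith

theorem le_twenty_mul_dist_of_quarter_lt_dist {pd : V → ℝ}
    (hx : infDist x S ≤ pd x) (hy : pd y ≤ 4 * infDist y S) (hfar : (1 / 4) * pd x < dist x y) :
    pd y ≤ 20 * dist x y := by
  have := infDist_le_five_mul_dist_of_infDist_le (S := S) (by linarith : infDist x S ≤ 4 * dist x y)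
  linarith

end PivotDistance

theorem sum_pivotDist_segment_endpoints_general {V : Type*} [PseudoMetricSpace V]
    (S : Set V) (pd : V → ℝ)
    (hpd : ∀ v : V, Metric.infDist v S ≤ pd v ∧ pd v ≤ 4 * Metric.infDist v S)
    (ℓ : ℕ) (y : ℕ → V)
    (hfar : ∀ s < ℓ, (1 / 4) * pd (y s) < dist (y s) (y (s + 1)))
    (D : ℝ) (hD : ∑ s ∈ Finset.range ℓ, dist (y s) (y (s + 1)) ≤ D) :
    ∑ s ∈ Finset.Icc 1 ℓ, pd (y s) ≤ 20 * D := by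
  rw [Finset.sum_Icc_one_eq_sum_range_succ]
  calc ∑ s ∈ Finset.range ℓ, pd (y (s + 1))
      ≤ ∑ s ∈ Finset.range ℓ, 20 * dist (y s) (y (s + 1)) := by
        refine Finset.sum_le_sum fun s hs => ?_
        exact le_twenty_mul_dist_of_quarter_lt_dist (hpd _).1 (hpd _).2
          (hfar s (Finset.mem_range.mp hs))
    _ = 20 * ∑ s ∈ Finset.range ℓ, dist (y s) (y (s + 1)) := (Finset.mul_sum ..).symm
    _ ≤ 20 * D := by linarith

theorem sum_pivotDist_segment_endpoints {V : Type*} [PseudoMetricSpace V]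
    (S : Set V) (hS : S.Nonempty) (pd : V → ℝ)
    (hpd : ∀ v : V, Metric.infDist v S ≤ pd v ∧ pd v ≤ 4 * Metric.infDist v S)
    (ℓ : ℕ) (hℓ : 1 ≤ ℓ) (y : ℕ → V)
    (hfar : ∀ s < ℓ, (1 / 4) * pd (y s) < dist (y s) (y (s + 1)))
    (D : ℝ) (hD : ∑ s ∈ Finset.range ℓ, dist (y s) (y (s + 1)) ≤ D) :
    ∑ s ∈ Finset.Icc 1 ℓ, pd (y s) ≤ 20 * D :=
  sum_pivotDist_segment_endpoints_general S pd hpd ℓ y hfar D hD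
end
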